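/- Let T be a finite tree with at least 3 vertices, and φ an automorphism of T with φ(φ(*)) ≠ * possible; suppose T is the convex hull of the φ-orbit of a vertex * of orbit size N, and suppose T has more than 2 vertices. Then the distance in T between * and φ^{N−1}(*) is at least 2. -/

import Mathlib

/-!
If `*` and `φ^{N-1}(*)` were at distance at most one, applying `φ` would make `*` either fixed or
adjacent to `φ(*)`. In the adjacent case `i ↦ φ^i(*)` maps the cycle graph on `ℤ/N` injectively
into the tree, which forces `N ≤ 2`. Either way the orbit consists of at most two vertices at
distance at most one, whose hull is the orbit itself, contradicting `|T| > 2`.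
-/

/-- The orbit `{φ^i s : 0 ≤ i < N}` of a vertex under iterates of a map. -/
def vertexOrbit {V : Type*} (φ : V → V) (s : V) (N : ℕ) : Set V :=
  {v | ∃ i < N, φ^[i] s = v}

/-- The convex hull of a set `S` of vertices in a graph: the union of all
geodesics between pairs of points of `S`. -/
def treeHull {V : Type*} (G : SimpleGraph V) (S : Set V) : Set V :=
  {v | ∃ a ∈ S, ∃ b ∈ S, G.dist a v + G.dist v b = G.dist a b}

open Function SimpleGraph

theorem SimpleGraph.Connected.adj_or_eq_of_dist_le_one {V : Type*} {G : SimpleGraph V}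
    (hG : G.Connected) {u v : V} (h : G.dist u v ≤ 1) : G.Adj u v ∨ u = v := by
  rcases Nat.le_one_iff_eq_zero_or_eq_one.mp h with h | h
  · exact .inr (hG.dist_eq_zero_iff.mp h)
  · exact .inl (dist_eq_one_iff_adj.mp h)

theorem SimpleGraph.Hom.adj_iterate_succ {V : Type*} {G : SimpleGraph V} (φ : G →g G) {s : V}
    (hadj : G.Adj s (φ s)) (i : ℕ) : G.Adj (φ^[i] s) (φ^[i + 1] s) := by
  induction i with
  | zero => simpa
  | succ i ih =>
    rw [iterate_succ_apply' φ, iterate_succ_apply' φ (i + 1)]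
    exact φ.map_adj ih

theorem SimpleGraph.IsAcyclic.minimalPeriod_le_two {V : Type*} {G : SimpleGraph V}
    (hG : G.IsAcyclic) (φ : G →g G) {s : V} (hadj : G.Adj s (φ s)) :
    minimalPeriod φ s ≤ 2 := by
  -- `minimalPeriod φ s = 0` when `s` is not periodic
  by_contra! hn
  obtain ⟨m, hm⟩ : ∃ m, minimalPeriod φ s = m + 3 := ⟨_, (Nat.sub_add_cancel hn).symm⟩
  have hstep {i j : Fin (m + 3)} (hij : j - i = 1) : G.Adj (φ^[i] s) (φ^[j] s) := by
    have hmod := iterate_mod_minimalPeriod_eq (f := φ) (x := s) (n := i + 1)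
    rw [hm] at hmod
    rw [sub_eq_iff_eq_add'.mp hij, Fin.val_add, Fin.val_one, hmod]
    exact φ.adj_iterate_succ hadj i
  have hinj : Injective fun i : Fin (m + 3) => φ^[i] s := fun i j hij =>
    Fin.ext (iterate_injOn_Iio_minimalPeriod (by simp [hm]) (by simp [hm]) hij)
  let c : Copy (cycleGraph (m + 3)) G :=
    ⟨⟨fun i => φ^[i] s, fun h => h.elim (fun h => (hstep h).symm) hstep⟩, hinj⟩
  exact isAcyclic_iff_free_cycleGraph.mp hG (m + 3) (by omega) ⟨c⟩

theorem treeHull_mono {V : Type*} (G : SimpleGraph V) {S T : Set V} (h : S ⊆ T) :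
    treeHull G S ⊆ treeHull G T :=
  fun _ ⟨a, ha, b, hb, hab⟩ => ⟨a, h ha, b, h hb, hab⟩

theorem treeHull_pair_subset {V : Type*} {G : SimpleGraph V} (hG : G.Connected) {a b : V}
    (hab : G.dist a b ≤ 1) : treeHull G {a, b} ⊆ {a, b} := by
  rintro v ⟨x, hx, y, hy, hxvy⟩
  have hxy : G.dist x y ≤ 1 := by
    rcases hx with rfl | rfl <;> rcases hy with rfl | rfl <;> grind [SimpleGraph.dist_comm]
  obtain hxv | hvy : G.dist x v = 0 ∨ G.dist v y = 0 := by omega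
  · exact hG.dist_eq_zero_iff.mp hxv ▸ hx
  · exact (hG.dist_eq_zero_iff.mp hvy).symm ▸ hy

theorem vertexOrbit_subset_pair {V : Type*} (f : V → V) (s : V) {N : ℕ} (hN : N ≤ 2) :
    vertexOrbit f s N ⊆ {s, f^[N - 1] s} := by
  rintro _ ⟨i, hi, rfl⟩
  obtain rfl | rfl : i = 0 ∨ i = N - 1 := by omega
  exacts [.inl rfl, .inr rfl]

/-- If a finite tree `T` with more than 2 vertices is the convex hull of the
`φ`-orbit of a vertex `*` of orbit size `N`, then the distance between `*` and
`φ^{N−1}(*)` is at least 2. -/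
theorem stmt13 {V : Type*} [Fintype V] (G : SimpleGraph V) (hT : G.IsTree)
    (φ : G ≃g G) (s : V) (N : ℕ) (hNpos : 0 < N)
    (hfix : (fun v => φ v)^[N] s = s)
    (hmin : ∀ k, 0 < k → (fun v => φ v)^[k] s = s → N ≤ k)
    (hbig : 2 < Fintype.card V)
    (hhull : treeHull G (vertexOrbit (fun v => φ v) s N) = Set.univ) :
    2 ≤ G.dist s ((fun v => φ v)^[N - 1] s) := by
  set f : V → V := fun v => φ v
  have hper : minimalPeriod f s = N := (IsPeriodicPt.minimalPeriod_le hNpos hfix).antisymm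
    (hmin _ (minimalPeriod_pos_of_mem_periodicPts ⟨N, hNpos, hfix⟩) (iterate_minimalPeriod))
  have hlast : f (f^[N - 1] s) = s := by
    rw [← iterate_succ_apply' f (N - 1) s, Nat.succ_eq_add_one, Nat.sub_add_cancel hNpos, hfix]
  by_contra! hlt
  replace hlt : G.dist s (f^[N - 1] s) ≤ 1 := by omega
  have hN : N ≤ 2 := by
    rw [← hper]
    rcases hT.connected.adj_or_eq_of_dist_le_one hlt with hadj | heq
    · have hadj' : G.Adj (f s) (f (f^[N - 1] s)) := φ.map_adj_iff.mpr hadj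
      rw [hlast] at hadj'
      exact hT.isAcyclic.minimalPeriod_le_two φ.toEmbedding.toHom hadj'.symm
    · have : IsFixedPt f s := (congrArg f heq).trans hlast
      rw [minimalPeriod_eq_one_iff_isFixedPt.mpr this]
      omega
  have hcover : ∀ v, v ∈ ({s, f^[N - 1] s} : Set V) := fun v =>
    treeHull_pair_subset hT.connected hlt <|
      treeHull_mono G (vertexOrbit_subset_pair f s hN) (hhull ▸ Set.mem_univ v)
  classical
  have hcard : Fintype.card V ≤ 2 :=
    calc Fintype.card V = (Finset.univ : Finset V).card := Finset.card_univ.symm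
      _ ≤ ({s, f^[N - 1] s} : Finset V).card :=
        Finset.card_le_card fun v _ => by simpa using hcover v
      _ ≤ 2 := Finset.card_le_two
  omega
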